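/- Let f, g : [0,T) → (0,∞) be differentiable with f(0) = g(0) = 1, satisfying f'(t) ≤ K f(t)(1 + ξ f(t)^a g(t)^{−b}) and g'(t) ≥ −K g(t)(1 + ξ f(t)^a g(t)^{−b}) for constants K, a, b, ξ > 0. Then as long as ξ f(t)^a g(t)^{−b} ≤ 1, we have f(t) ≤ e^{2Kt} and g(t) ≥ e^{−2Kt}; consequently the condition ξ f^a g^{−b} ≤ 1 persists at least up to time t* = −ln(ξ)/(2K(a+b)) (when ξ < 1). -/
import Mathlib

/-- Gronwall-type estimate: if `ξ f^a g^{-b} ≤ 1` on `[0,t)` then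
`f t ≤ e^{2Kt}` and `g t ≥ e^{-2Kt}`. -/
lemma stmt5_aux (T K a b ξ : ℝ) (hK : 0 < K)
    (f g f' g' : ℝ → ℝ) (hf0 : f 0 = 1) (hg0 : g 0 = 1)
    (hfpos : ∀ t ∈ Set.Ico (0 : ℝ) T, 0 < f t) (hgpos : ∀ t ∈ Set.Ico (0 : ℝ) T, 0 < g t)
    (hf : ∀ t ∈ Set.Ico (0 : ℝ) T, HasDerivAt f (f' t) t)
    (hg : ∀ t ∈ Set.Ico (0 : ℝ) T, HasDerivAt g (g' t) t)
    (hf' : ∀ t ∈ Set.Ico (0 : ℝ) T, f' t ≤ K * f t * (1 + ξ * f t ^ a * g t ^ (-b)))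
    (hg' : ∀ t ∈ Set.Ico (0 : ℝ) T, -(K * g t * (1 + ξ * f t ^ a * g t ^ (-b))) ≤ g' t)
    (t : ℝ) (ht : t ∈ Set.Ico (0 : ℝ) T)
    (H : ∀ s ∈ Set.Ico (0 : ℝ) t, ξ * f s ^ a * g s ^ (-b) ≤ 1) :
    f t ≤ Real.exp (2 * K * t) ∧ Real.exp (-(2 * K * t)) ≤ g t := by
  have hsub : Set.Icc (0 : ℝ) t ⊆ Set.Ico (0 : ℝ) T :=
    fun s hs => ⟨hs.1, lt_of_le_of_lt hs.2 ht.2⟩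
  -- derivative of the exponential weights
  have hE : ∀ (c : ℝ) (s : ℝ), HasDerivAt (fun u => Real.exp (c * u))
      (Real.exp (c * s) * c) s := by
    intro c s
    have h1 : HasDerivAt (fun u : ℝ => c * u) c s := by
      simpa using (hasDerivAt_id s).const_mul c
    exact h1.exp
  -- F = f * exp(-2Ks) is antitone on [0,t]
  have hFderiv : ∀ s ∈ Set.Icc (0 : ℝ) t,
      HasDerivAt (fun u => f u * Real.exp (-(2 * K) * u))
        (f' s * Real.exp (-(2 * K) * s) + f s * (Real.exp (-(2 * K) * s) * (-(2 * K)))) s :=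
    fun s hs => (hf s (hsub hs)).mul (hE (-(2 * K)) s)
  have hGderiv : ∀ s ∈ Set.Icc (0 : ℝ) t,
      HasDerivAt (fun u => g u * Real.exp ((2 * K) * u))
        (g' s * Real.exp ((2 * K) * s) + g s * (Real.exp ((2 * K) * s) * (2 * K))) s :=
    fun s hs => (hg s (hsub hs)).mul (hE (2 * K) s)
  have hbound : ∀ s ∈ Set.Ioo (0 : ℝ) t,
      f' s ≤ 2 * K * f s ∧ -(2 * K * g s) ≤ g' s := by
    intro s hs
    have hsT : s ∈ Set.Ico (0 : ℝ) T := hsub ⟨hs.1.le, hs.2.le⟩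
    have h1 := hf' s hsT
    have h2 := hg' s hsT
    have h3 := H s ⟨hs.1.le, hs.2⟩
    have h4 : 0 < f s := hfpos s hsT
    have h5 : 0 < g s := hgpos s hsT
    have key : K * f s * (ξ * f s ^ a * g s ^ (-b)) ≤ K * f s * 1 :=
      mul_le_mul_of_nonneg_left h3 (le_of_lt (mul_pos hK h4))
    have key2 : K * g s * (ξ * f s ^ a * g s ^ (-b)) ≤ K * g s * 1 :=
      mul_le_mul_of_nonneg_left h3 (le_of_lt (mul_pos hK h5))
    constructor
    · nlinarith [key]
    · nlinarith [key2]
  have hFanti : AntitoneOn (fun u => f u * Real.exp (-(2 * K) * u)) (Set.Icc 0 t) := by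
    apply antitoneOn_of_deriv_nonpos (convex_Icc 0 t)
    · exact fun s hs => ((hFderiv s hs).continuousAt).continuousWithinAt
    · intro s hs
      rw [interior_Icc] at hs
      exact ((hFderiv s ⟨hs.1.le, hs.2.le⟩).differentiableAt).differentiableWithinAt
    · intro s hs
      rw [interior_Icc] at hs
      rw [(hFderiv s ⟨hs.1.le, hs.2.le⟩).deriv]
      have hE1 : 0 < Real.exp (-(2 * K) * s) := Real.exp_pos _
      have := (hbound s hs).1
      nlinarith
  have hGmono : MonotoneOn (fun u => g u * Real.exp ((2 * K) * u)) (Set.Icc 0 t) := by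
    apply monotoneOn_of_deriv_nonneg (convex_Icc 0 t)
    · exact fun s hs => ((hGderiv s hs).continuousAt).continuousWithinAt
    · intro s hs
      rw [interior_Icc] at hs
      exact ((hGderiv s ⟨hs.1.le, hs.2.le⟩).differentiableAt).differentiableWithinAt
    · intro s hs
      rw [interior_Icc] at hs
      rw [(hGderiv s ⟨hs.1.le, hs.2.le⟩).deriv]
      have hE1 : 0 < Real.exp ((2 * K) * s) := Real.exp_pos _
      have := (hbound s hs).2
      nlinarith
  have h0mem : (0 : ℝ) ∈ Set.Icc (0 : ℝ) t := ⟨le_refl 0, ht.1⟩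
  have htmem : t ∈ Set.Icc (0 : ℝ) t := ⟨ht.1, le_refl t⟩
  have hF := hFanti h0mem htmem ht.1
  have hG := hGmono h0mem htmem ht.1
  simp only [hf0, hg0, mul_zero, Real.exp_zero, one_mul, mul_one] at hF hG
  constructor
  · have key : Real.exp (-(2 * K) * t) * Real.exp (2 * K * t) = 1 := by
      rw [← Real.exp_add, show -(2 * K) * t + 2 * K * t = 0 by ring, Real.exp_zero]
    calc f t = f t * Real.exp (-(2 * K) * t) * Real.exp (2 * K * t) := by
          rw [mul_assoc, key, mul_one]
      _ ≤ 1 * Real.exp (2 * K * t) := mul_le_mul_of_nonneg_right hF (Real.exp_pos _).le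
      _ = Real.exp (2 * K * t) := one_mul _
  · have hE1 : (0:ℝ) < Real.exp (2 * K * t) := Real.exp_pos _
    calc Real.exp (-(2 * K * t)) = (Real.exp (2 * K * t))⁻¹ := Real.exp_neg _
      _ = 1 * (Real.exp (2 * K * t))⁻¹ := (one_mul _).symm
      _ ≤ g t * Real.exp (2 * K * t) * (Real.exp (2 * K * t))⁻¹ :=
          mul_le_mul_of_nonneg_right hG (inv_nonneg.mpr hE1.le)
      _ = g t := by field_simp

/-- Bootstrap argument (Step C of the mean-field limit proof): for positive differentiable
`f, g` with `f(0) = g(0) = 1`, `f' ≤ K f (1 + ξ f^a g^{-b})`, `g' ≥ -K g (1 + ξ f^a g^{-b})`,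
as long as `ξ f^a g^{-b} ≤ 1` one has `f ≤ e^{2Kt}` and `g ≥ e^{-2Kt}`, and when `ξ < 1` the
condition `ξ f^a g^{-b} ≤ 1` persists up to time `-ln ξ / (2K(a+b))`. -/
theorem stmt5 (T K a b ξ : ℝ) (hT : 0 < T) (hK : 0 < K) (ha : 0 < a) (hb : 0 < b) (hξ : 0 < ξ)
    (f g f' g' : ℝ → ℝ) (hf0 : f 0 = 1) (hg0 : g 0 = 1)
    (hfpos : ∀ t ∈ Set.Ico (0 : ℝ) T, 0 < f t) (hgpos : ∀ t ∈ Set.Ico (0 : ℝ) T, 0 < g t)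
    (hf : ∀ t ∈ Set.Ico (0 : ℝ) T, HasDerivAt f (f' t) t)
    (hg : ∀ t ∈ Set.Ico (0 : ℝ) T, HasDerivAt g (g' t) t)
    (hf' : ∀ t ∈ Set.Ico (0 : ℝ) T, f' t ≤ K * f t * (1 + ξ * f t ^ a * g t ^ (-b)))
    (hg' : ∀ t ∈ Set.Ico (0 : ℝ) T, -(K * g t * (1 + ξ * f t ^ a * g t ^ (-b))) ≤ g' t) :
    (∀ t ∈ Set.Ico (0 : ℝ) T,
      (∀ s ∈ Set.Icc (0 : ℝ) t, ξ * f s ^ a * g s ^ (-b) ≤ 1) →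
        f t ≤ Real.exp (2 * K * t) ∧ Real.exp (-(2 * K * t)) ≤ g t) ∧
    (ξ < 1 → ∀ t ∈ Set.Ico (0 : ℝ) T, t ≤ -Real.log ξ / (2 * K * (a + b)) →
        ξ * f t ^ a * g t ^ (-b) ≤ 1) := by
  constructor
  · intro t ht H
    exact stmt5_aux T K a b ξ hK f g f' g' hf0 hg0 hfpos hgpos hf hg hf' hg' t ht
      (fun s hs => H s ⟨hs.1, hs.2.le⟩)
  · intro hξ1 t ht htstar
    by_contra hcontra
    push_neg at hcontra
    set D : Set ℝ := {s : ℝ | s ∈ Set.Icc 0 t ∧ 1 < ξ * f s ^ a * g s ^ (-b)} with hD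
    have hDne : D.Nonempty := ⟨t, ⟨⟨ht.1, le_refl t⟩, hcontra⟩⟩
    have hbdd : BddBelow D := ⟨0, fun d hd => hd.1.1⟩
    set c : ℝ := sInf D with hcdef
    have hc0 : 0 ≤ c := le_csInf hDne fun d hd => hd.1.1
    have hct : c ≤ t := csInf_le hbdd ⟨⟨ht.1, le_refl t⟩, hcontra⟩
    have hcT : c ∈ Set.Ico (0 : ℝ) T := ⟨hc0, lt_of_le_of_lt hct ht.2⟩
    have Hc : ∀ u ∈ Set.Ico (0 : ℝ) c, ξ * f u ^ a * g u ^ (-b) ≤ 1 := by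
      intro u hu
      by_contra hgt
      push_neg at hgt
      exact absurd (csInf_le hbdd ⟨⟨hu.1, hu.2.le.trans hct⟩, hgt⟩) (not_le.mpr hu.2)
    obtain ⟨hfc, hgc⟩ :=
      stmt5_aux T K a b ξ hK f g f' g' hf0 hg0 hfpos hgpos hf hg hf' hg' c hcT Hc
    set M : ℝ := 2 * K * (a + b) with hMdef
    have hM : 0 < M := by positivity
    have hlog : M * t ≤ -Real.log ξ := by
      rw [le_div_iff₀ hM] at htstar
      linarith
    -- the key quantitative bound at c
    have hfca : f c ^ a ≤ Real.exp (2 * K * c) ^ a :=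
      Real.rpow_le_rpow (hfpos c hcT).le hfc ha.le
    have hgcb : g c ^ (-b) ≤ Real.exp (-(2 * K * c)) ^ (-b) :=
      Real.rpow_le_rpow_of_nonpos (Real.exp_pos _) hgc (neg_nonpos.mpr hb.le)
    have hbound : ξ * f c ^ a * g c ^ (-b) ≤ ξ * Real.exp (M * c) := by
      have h1 : ξ * f c ^ a ≤ ξ * Real.exp (2 * K * c) ^ a :=
        mul_le_mul_of_nonneg_left hfca hξ.le
      have h2 : (0 : ℝ) ≤ g c ^ (-b) := (Real.rpow_pos_of_pos (hgpos c hcT) _).le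
      have h3 : (0 : ℝ) ≤ ξ * Real.exp (2 * K * c) ^ a := by positivity
      calc ξ * f c ^ a * g c ^ (-b)
          ≤ ξ * Real.exp (2 * K * c) ^ a * Real.exp (-(2 * K * c)) ^ (-b) :=
            mul_le_mul h1 hgcb h2 h3
        _ = ξ * Real.exp (M * c) := by
            rw [← Real.exp_mul, ← Real.exp_mul, mul_assoc, ← Real.exp_add]
            congr 1
            rw [hMdef]; ring
    rcases lt_or_eq_of_le hct with hlt | heq
    · -- c < t : continuity gives 1 ≤ value at c, contradicting the strict bound
      have hsub : Set.Icc (0 : ℝ) t ⊆ Set.Ico (0 : ℝ) T :=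
        fun s hs => ⟨hs.1, lt_of_le_of_lt hs.2 ht.2⟩
      have hfcont : ContinuousOn f (Set.Icc 0 t) :=
        fun s hs => ((hf s (hsub hs)).continuousAt).continuousWithinAt
      have hgcont : ContinuousOn g (Set.Icc 0 t) :=
        fun s hs => ((hg s (hsub hs)).continuousAt).continuousWithinAt
      have hcont : ContinuousOn (fun s => ξ * f s ^ a * g s ^ (-b)) (Set.Icc 0 t) :=
        (continuousOn_const.mul (hfcont.rpow_const fun s _ => Or.inr ha.le)).mul
          (hgcont.rpow_const fun s hs => Or.inl (ne_of_gt (hgpos s (hsub hs))))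
      have hDsub : D ⊆ Set.Icc (0 : ℝ) t := fun d hd => hd.1
      have hcw : ContinuousWithinAt (fun s => ξ * f s ^ a * g s ^ (-b)) D c :=
        (hcont c ⟨hc0, hct⟩).mono hDsub
      have hcl : c ∈ closure D := csInf_mem_closure hDne hbdd
      haveI : (nhdsWithin c D).NeBot := mem_closure_iff_nhdsWithin_neBot.mp hcl
      have h1c : 1 ≤ ξ * f c ^ a * g c ^ (-b) :=
        ge_of_tendsto hcw (eventually_mem_nhdsWithin.mono fun x hx => hx.2.le)
      have hstrict : ξ * Real.exp (M * c) < 1 := by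
        rw [← Real.exp_log hξ, ← Real.exp_add]
        rw [← Real.exp_zero]
        apply Real.exp_lt_exp.mpr
        have : M * c < M * t := by
          exact mul_lt_mul_of_pos_left hlt hM
        linarith
      linarith
    · -- c = t : the value at t itself exceeds 1, contradicting the non-strict bound
      have hle : ξ * Real.exp (M * c) ≤ 1 := by
        rw [← Real.exp_log hξ, ← Real.exp_add]
        rw [← Real.exp_zero]
        apply Real.exp_le_exp.mpr
        have : M * c ≤ M * t := mul_le_mul_of_nonneg_left hct hM.le
        linarith
      rw [heq] at hbound hle
      linarith
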